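/- arXiv:1307.2639 — 2 statements merged into one kernel-verified Lean document; each statement's English description precedes it below -/
import Mathlib

section
/- Let u : ℝ² → ℝ be smooth, with variables x, y. Define L[u] = (1/2)·u_x·u_y − cos u, and let φ = u_xxx + (1/2)·u_x³ where subscripts denote partial derivatives. Define M[u] = (1/2)·φ·u_x − (1/8)·u_x⁴ + (1/2)·u_xx², and N[u] = (1/2)·φ·u_y − (1/2)·u_x²·cos u − u_xx·(u_xy − sin u). If u satisfies the sine-Gordon equation u_xy = sin u, then D_x N + D_y M equals the result of applying the prolonged evolutionary vector field generated by φ to L, namely (1/2)(φ_y·u_x + φ_x·u_y) + φ·sin u, where φ_x, φ_y denote total derivatives of φ[u]. -/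
/-- Total derivative with respect to the first variable `x`. -/
noncomputable def Dx (f : ℝ → ℝ → ℝ) : ℝ → ℝ → ℝ := fun x y => deriv (fun s => f s y) x

/-- Total derivative with respect to the second variable `y`. -/
noncomputable def Dy (f : ℝ → ℝ → ℝ) : ℝ → ℝ → ℝ := fun x y => deriv (fun t => f x t) y

section helpers
variable {f : ℝ → ℝ → ℝ}

lemma hasDerivAt_px (hf : ContDiff ℝ (⊤ : ℕ∞) fun p : ℝ × ℝ => f p.1 p.2) (x y : ℝ) :
    HasDerivAt (fun s => f s y) (fderiv ℝ (fun p : ℝ × ℝ => f p.1 p.2) (x, y) (1, 0)) x := by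
  have h := (hf.differentiable (by simp) (x := (x, y))).hasFDerivAt
  have hl : HasDerivAt (fun s : ℝ => ((s, y) : ℝ × ℝ)) ((1 : ℝ), (0 : ℝ)) x :=
    HasDerivAt.prodMk (hasDerivAt_id x) (hasDerivAt_const x y)
  exact h.comp_hasDerivAt x hl

lemma hasDerivAt_py (hf : ContDiff ℝ (⊤ : ℕ∞) fun p : ℝ × ℝ => f p.1 p.2) (x y : ℝ) :
    HasDerivAt (fun t => f x t) (fderiv ℝ (fun p : ℝ × ℝ => f p.1 p.2) (x, y) (0, 1)) y := by
  have h := (hf.differentiable (by simp) (x := (x, y))).hasFDerivAt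
  have hl : HasDerivAt (fun t : ℝ => ((x, t) : ℝ × ℝ)) ((0 : ℝ), (1 : ℝ)) y :=
    HasDerivAt.prodMk (hasDerivAt_const y x) (hasDerivAt_id y)
  exact h.comp_hasDerivAt y hl

lemma hasDerivAt_Dx (hf : ContDiff ℝ (⊤ : ℕ∞) fun p : ℝ × ℝ => f p.1 p.2) (x y : ℝ) :
    HasDerivAt (fun s => f s y) (Dx f x y) x := by
  have h := hasDerivAt_px hf x y
  have : Dx f x y = fderiv ℝ (fun p : ℝ × ℝ => f p.1 p.2) (x, y) (1, 0) := h.deriv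
  rw [this]; exact h

lemma hasDerivAt_Dy (hf : ContDiff ℝ (⊤ : ℕ∞) fun p : ℝ × ℝ => f p.1 p.2) (x y : ℝ) :
    HasDerivAt (fun t => f x t) (Dy f x y) y := by
  have h := hasDerivAt_py hf x y
  have : Dy f x y = fderiv ℝ (fun p : ℝ × ℝ => f p.1 p.2) (x, y) (0, 1) := h.deriv
  rw [this]; exact h

lemma contDiff_Dx (hf : ContDiff ℝ (⊤ : ℕ∞) fun p : ℝ × ℝ => f p.1 p.2) :
    ContDiff ℝ (⊤ : ℕ∞) fun p : ℝ × ℝ => Dx f p.1 p.2 := by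
  have he : (fun p : ℝ × ℝ => Dx f p.1 p.2)
      = fun p : ℝ × ℝ => fderiv ℝ (fun q : ℝ × ℝ => f q.1 q.2) p (1, 0) := by
    funext p
    exact (hasDerivAt_px hf p.1 p.2).deriv
  rw [he]
  exact (hf.fderiv_right (by simp)).clm_apply contDiff_const

lemma contDiff_Dy (hf : ContDiff ℝ (⊤ : ℕ∞) fun p : ℝ × ℝ => f p.1 p.2) :
    ContDiff ℝ (⊤ : ℕ∞) fun p : ℝ × ℝ => Dy f p.1 p.2 := by
  have he : (fun p : ℝ × ℝ => Dy f p.1 p.2)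
      = fun p : ℝ × ℝ => fderiv ℝ (fun q : ℝ × ℝ => f q.1 q.2) p (0, 1) := by
    funext p
    exact (hasDerivAt_py hf p.1 p.2).deriv
  rw [he]
  exact (hf.fderiv_right (by simp)).clm_apply contDiff_const

lemma fderiv_apply_snd (hf : ContDiff ℝ (⊤ : ℕ∞) fun p : ℝ × ℝ => f p.1 p.2) (p : ℝ × ℝ)
    (v w : ℝ × ℝ) :
    fderiv ℝ (fun q : ℝ × ℝ => fderiv ℝ (fun r : ℝ × ℝ => f r.1 r.2) q v) p w
      = fderiv ℝ (fderiv ℝ fun r : ℝ × ℝ => f r.1 r.2) p w v := by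
  set F := fun r : ℝ × ℝ => f r.1 r.2
  have hdf : DifferentiableAt ℝ (fderiv ℝ F) p :=
    ((hf.fderiv_right (m := 1) (WithTop.coe_le_coe.mpr le_top)).differentiable one_ne_zero).differentiableAt
  have h := ((ContinuousLinearMap.apply ℝ ℝ v).hasFDerivAt.comp p hdf.hasFDerivAt)
  have := h.fderiv
  rw [show (⇑(ContinuousLinearMap.apply ℝ ℝ v) ∘ fderiv ℝ F) = fun q => fderiv ℝ F q v from rfl] at this
  rw [this]
  rfl

lemma clairaut (hf : ContDiff ℝ (⊤ : ℕ∞) fun p : ℝ × ℝ => f p.1 p.2) (x y : ℝ) :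
    Dx (Dy f) x y = Dy (Dx f) x y := by
  set F := fun r : ℝ × ℝ => f r.1 r.2 with hF
  have hsymm : IsSymmSndFDerivAt ℝ F (x, y) :=
    hf.contDiffAt.isSymmSndFDerivAt (by
      rw [minSmoothness_of_isRCLikeNormedField]; exact WithTop.coe_le_coe.mpr le_top)
  have h1 : Dx (Dy f) x y = fderiv ℝ (fun q : ℝ × ℝ => fderiv ℝ F q (0, 1)) (x, y) (1, 0) := by
    have hg : (fun p : ℝ × ℝ => Dy f p.1 p.2) = fun q : ℝ × ℝ => fderiv ℝ F q (0, 1) := by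
      funext p; exact (hasDerivAt_py hf p.1 p.2).deriv
    have h := (hasDerivAt_px (contDiff_Dy hf) x y).deriv
    rw [hg] at h
    exact h
  have h2 : Dy (Dx f) x y = fderiv ℝ (fun q : ℝ × ℝ => fderiv ℝ F q (1, 0)) (x, y) (0, 1) := by
    have hg : (fun p : ℝ × ℝ => Dx f p.1 p.2) = fun q : ℝ × ℝ => fderiv ℝ F q (1, 0) := by
      funext p; exact (hasDerivAt_px hf p.1 p.2).deriv
    have h := (hasDerivAt_py (contDiff_Dx hf) x y).deriv
    rw [hg] at h
    exact h
  rw [h1, h2, fderiv_apply_snd hf, fderiv_apply_snd hf]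
  exact hsymm _ _

end helpers

/-- The prolonged evolutionary vector field generated by `φ = u_xxx + (1/2)u_x³` is a
variational symmetry of the sine-Gordon Lagrangian `L = (1/2)u_x u_y - cos u`:
on solutions of `u_xy = sin u` one has `D_x N + D_y M = D_φ L`. -/
theorem stmt_0 (u : ℝ → ℝ → ℝ)
    (hu : ContDiff ℝ (⊤ : ℕ∞) fun p : ℝ × ℝ => u p.1 p.2)
    (L φ M N : ℝ → ℝ → ℝ)
    (hL : ∀ x y, L x y = (1/2) * Dx u x y * Dy u x y - Real.cos (u x y))
    (hφ : ∀ x y, φ x y = Dx (Dx (Dx u)) x y + (1/2) * (Dx u x y)^3)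
    (hM : ∀ x y, M x y = (1/2) * φ x y * Dx u x y - (1/8) * (Dx u x y)^4
          + (1/2) * (Dx (Dx u) x y)^2)
    (hN : ∀ x y, N x y = (1/2) * φ x y * Dy u x y
          - (1/2) * (Dx u x y)^2 * Real.cos (u x y)
          - Dx (Dx u) x y * (Dy (Dx u) x y - Real.sin (u x y)))
    (hSG : ∀ x y, Dy (Dx u) x y = Real.sin (u x y)) :
    ∀ x y, Dx N x y + Dy M x y
      = (1/2) * (Dy φ x y * Dx u x y + Dx φ x y * Dy u x y)
        + φ x y * Real.sin (u x y) := by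
  intro x y
  -- smoothness facts
  have hux : ContDiff ℝ (⊤ : ℕ∞) fun p : ℝ × ℝ => Dx u p.1 p.2 := contDiff_Dx hu
  have huy : ContDiff ℝ (⊤ : ℕ∞) fun p : ℝ × ℝ => Dy u p.1 p.2 := contDiff_Dy hu
  have huxx : ContDiff ℝ (⊤ : ℕ∞) fun p : ℝ × ℝ => Dx (Dx u) p.1 p.2 := contDiff_Dx hux
  have huxxx : ContDiff ℝ (⊤ : ℕ∞) fun p : ℝ × ℝ => Dx (Dx (Dx u)) p.1 p.2 := contDiff_Dx huxx
  have hφs : ContDiff ℝ (⊤ : ℕ∞) fun p : ℝ × ℝ => φ p.1 p.2 := by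
    have : (fun p : ℝ × ℝ => φ p.1 p.2)
        = fun p : ℝ × ℝ => Dx (Dx (Dx u)) p.1 p.2 + (1/2) * (Dx u p.1 p.2)^3 := by
      funext p; exact hφ p.1 p.2
    rw [this]
    exact huxxx.add (contDiff_const.mul (hux.pow 3))
  -- x-direction derivatives at (x,y)
  have dU : HasDerivAt (fun s => u s y) (Dx u x y) x := hasDerivAt_Dx hu x y
  have dUx : HasDerivAt (fun s => Dx u s y) (Dx (Dx u) x y) x := hasDerivAt_Dx hux x y
  have dUy : HasDerivAt (fun s => Dy u s y) (Real.sin (u x y)) x := by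
    have h := hasDerivAt_Dx huy x y
    rwa [clairaut hu, hSG] at h
  have dφ : HasDerivAt (fun s => φ s y) (Dx φ x y) x := hasDerivAt_Dx hφs x y
  have dcos : HasDerivAt (fun s => Real.cos (u s y)) (-Real.sin (u x y) * Dx u x y) x := dU.cos
  -- y-direction derivatives at (x,y)
  have eU : HasDerivAt (fun t => u x t) (Dy u x y) y := hasDerivAt_Dy hu x y
  have eUx : HasDerivAt (fun t => Dx u x t) (Real.sin (u x y)) y := by
    have h := hasDerivAt_Dy hux x y
    rwa [hSG] at h
  have eUxx : HasDerivAt (fun t => Dx (Dx u) x t) (Real.cos (u x y) * Dx u x y) y := by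
    have h := hasDerivAt_Dy huxx x y
    have hkey : Dy (Dx (Dx u)) x y = Real.cos (u x y) * Dx u x y := by
      rw [← clairaut hux x y]
      have hg : (fun s => Dy (Dx u) s y) = fun s => Real.sin (u s y) := by
        funext s; exact hSG s y
      have hr : Dx (Dy (Dx u)) x y = deriv (fun s => Dy (Dx u) s y) x := rfl
      rw [hr, hg, (dU.sin).deriv]
    rwa [hkey] at h
  have eφ : HasDerivAt (fun t => φ x t) (Dy φ x y) y := hasDerivAt_Dy hφs x y
  -- compute Dx N
  have hNfun : (fun s => N s y)
      = fun s => (1/2) * φ s y * Dy u s y - (1/2) * (Dx u s y)^2 * Real.cos (u s y) := by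
    funext s; rw [hN, hSG]; ring
  have hdN : HasDerivAt (fun s => (1/2) * φ s y * Dy u s y
      - (1/2) * (Dx u s y)^2 * Real.cos (u s y))
      (((1/2) * Dx φ x y * Dy u x y + (1/2) * φ x y * Real.sin (u x y))
        - ((1/2) * ((2:ℕ) * Dx u x y ^ 1 * Dx (Dx u) x y) * Real.cos (u x y)
          + (1/2) * (Dx u x y)^2 * (-Real.sin (u x y) * Dx u x y))) x := by
    exact ((dφ.const_mul (1/2 : ℝ)).mul dUy).sub (((dUx.pow 2).const_mul (1/2 : ℝ)).mul dcos)
  have hA : Dx N x y = (1/2) * Dx φ x y * Dy u x y + (1/2) * φ x y * Real.sin (u x y)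
      - Dx u x y * Dx (Dx u) x y * Real.cos (u x y)
      + (1/2) * (Dx u x y)^3 * Real.sin (u x y) := by
    have hr : Dx N x y = deriv (fun s => N s y) x := rfl
    rw [hr, hNfun, hdN.deriv]
    push_cast
    ring
  -- compute Dy M
  have hMfun : (fun t => M x t)
      = fun t => (1/2) * φ x t * Dx u x t - (1/8) * (Dx u x t)^4
          + (1/2) * (Dx (Dx u) x t)^2 := by
    funext t; rw [hM]
  have hdM : HasDerivAt (fun t => (1/2) * φ x t * Dx u x t - (1/8) * (Dx u x t)^4
      + (1/2) * (Dx (Dx u) x t)^2)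
      ((((1/2) * Dy φ x y * Dx u x y + (1/2) * φ x y * Real.sin (u x y))
        - (1/8) * ((4:ℕ) * Dx u x y ^ 3 * Real.sin (u x y)))
        + (1/2) * ((2:ℕ) * Dx (Dx u) x y ^ 1 * (Real.cos (u x y) * Dx u x y))) y := by
    exact (((eφ.const_mul (1/2 : ℝ)).mul eUx).sub ((eUx.pow 4).const_mul (1/8 : ℝ))).add
      ((eUxx.pow 2).const_mul (1/2 : ℝ))
  have hB : Dy M x y = (1/2) * Dy φ x y * Dx u x y + (1/2) * φ x y * Real.sin (u x y)
      - (1/2) * (Dx u x y)^3 * Real.sin (u x y)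
      + Dx (Dx u) x y * Real.cos (u x y) * Dx u x y := by
    have hr : Dy M x y = deriv (fun t => M x t) y := rfl
    rw [hr, hMfun, hdM.deriv]
    push_cast
    ring
  rw [hA, hB]
  ring
end

section
/- Let u : ℝ² → ℝ be smooth with variables x, y, and let L = (1/2)u_x u_y − cos u, φ = u_xxx + (1/2)u_x³, M = (1/2)φ u_x − (1/8)u_x⁴ + (1/2)u_xx², N = (1/2)φ u_y − (1/2)u_x² cos u − u_xx(u_xy − sin u). Then the identity φ·(sin u − u_xy) = D_x( N − (1/2)φ u_y ) + D_y( M − (1/2)φ u_x ) holds for all smooth u; i.e., the product of the symmetry characteristic φ with the Euler–Lagrange expression of L is a total divergence. -/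
/-- Directional partial derivative on the plane. -/
noncomputable def pd (v : ℝ × ℝ) (G : ℝ × ℝ → ℝ) : ℝ × ℝ → ℝ := fun p => fderiv ℝ G p v

lemma pd_contDiff {G : ℝ × ℝ → ℝ} (hG : ContDiff ℝ (⊤ : ℕ∞) G) (v : ℝ × ℝ) :
    ContDiff ℝ (⊤ : ℕ∞) (pd v G) :=
  (hG.fderiv_right (by simp)).clm_apply contDiff_const

lemma pd_hasDerivAt_x {G : ℝ × ℝ → ℝ} (hG : ContDiff ℝ (⊤ : ℕ∞) G) (x y : ℝ) :
    HasDerivAt (fun s => G (s, y)) (pd (1, 0) G (x, y)) x := by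
  have h1 : HasFDerivAt G (fderiv ℝ G (x, y)) (x, y) :=
    (hG.differentiable (by simp) (x, y)).hasFDerivAt
  have h2 : HasDerivAt (fun s : ℝ => (s, y)) ((1 : ℝ), (0 : ℝ)) x :=
    HasDerivAt.prodMk (hasDerivAt_id x) (hasDerivAt_const x y)
  exact h1.comp_hasDerivAt x h2

lemma pd_hasDerivAt_y {G : ℝ × ℝ → ℝ} (hG : ContDiff ℝ (⊤ : ℕ∞) G) (x y : ℝ) :
    HasDerivAt (fun t => G (x, t)) (pd (0, 1) G (x, y)) y := by
  have h1 : HasFDerivAt G (fderiv ℝ G (x, y)) (x, y) :=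
    (hG.differentiable (by simp) (x, y)).hasFDerivAt
  have h2 : HasDerivAt (fun t : ℝ => (x, t)) ((0 : ℝ), (1 : ℝ)) y :=
    HasDerivAt.prodMk (hasDerivAt_const y x) (hasDerivAt_id y)
  exact h1.comp_hasDerivAt y h2

lemma pd_comm {G : ℝ × ℝ → ℝ} (hG : ContDiff ℝ (⊤ : ℕ∞) G) (v w p : ℝ × ℝ) :
    pd w (pd v G) p = pd v (pd w G) p := by
  have hd : DifferentiableAt ℝ (fderiv ℝ G) p :=
    ((hG.fderiv_right (m := (⊤ : ℕ∞)) (by simp)).differentiable (by simp)) p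
  have key : ∀ a : ℝ × ℝ, pd a G = fun q => fderiv ℝ G q a := fun _ => rfl
  have hfl : ∀ a b : ℝ × ℝ, pd b (pd a G) p = fderiv ℝ (fderiv ℝ G) p b a := by
    intro a b
    have : fderiv ℝ (fun q => fderiv ℝ G q a) p
        = (fderiv ℝ (fderiv ℝ G) p).flip a := by
      have := fderiv_clm_apply (𝕜 := ℝ) (c := fderiv ℝ G) (u := fun _ => a)
        hd (differentiableAt_const a)
      simpa using this
    show fderiv ℝ (fun q => fderiv ℝ G q a) p b = _
    rw [this]; rfl
  have hsym : IsSymmSndFDerivAt ℝ G p :=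
    hG.contDiffAt.isSymmSndFDerivAt (by
      rw [minSmoothness_of_isRCLikeNormedField]; exact WithTop.coe_le_coe.mpr (le_top : (2 : ℕ∞) ≤ ⊤))
  rw [hfl v w, hfl w v]
  exact hsym w v

/-- Noether identity (off-shell): the product of the symmetry characteristic
`φ = u_xxx + (1/2)u_x³` with the Euler–Lagrange expression `sin u - u_xy` of
`L = (1/2)u_x u_y - cos u` is a total divergence:
`φ(sin u - u_xy) = D_x(N - (1/2)φ u_y) + D_y(M - (1/2)φ u_x)`. -/
theorem stmt_18 (u : ℝ → ℝ → ℝ)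
    (hu : ContDiff ℝ (⊤ : ℕ∞) fun p : ℝ × ℝ => u p.1 p.2)
    (L φ M N : ℝ → ℝ → ℝ)
    (hL : ∀ x y, L x y = (1/2) * Dx u x y * Dy u x y - Real.cos (u x y))
    (hφ : ∀ x y, φ x y = Dx (Dx (Dx u)) x y + (1/2) * (Dx u x y)^3)
    (hM : ∀ x y, M x y = (1/2) * φ x y * Dx u x y - (1/8) * (Dx u x y)^4
          + (1/2) * (Dx (Dx u) x y)^2)
    (hN : ∀ x y, N x y = (1/2) * φ x y * Dy u x y
          - (1/2) * (Dx u x y)^2 * Real.cos (u x y)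
          - Dx (Dx u) x y * (Dy (Dx u) x y - Real.sin (u x y))) :
    ∀ x y, φ x y * (Real.sin (u x y) - Dy (Dx u) x y)
      = Dx (fun a b => N a b - (1/2) * φ a b * Dy u a b) x y
        + Dy (fun a b => M a b - (1/2) * φ a b * Dx u a b) x y := by
  intro x y
  set F : ℝ × ℝ → ℝ := fun p => u p.1 p.2 with hFdef
  have hF : ContDiff ℝ (⊤ : ℕ∞) F := hu
  set P1 : ℝ × ℝ → ℝ := pd (1, 0) F with hP1def
  have hP1 : ContDiff ℝ (⊤ : ℕ∞) P1 := pd_contDiff hF _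
  set P2 : ℝ × ℝ → ℝ := pd (1, 0) P1 with hP2def
  have hP2 : ContDiff ℝ (⊤ : ℕ∞) P2 := pd_contDiff hP1 _
  set P3 : ℝ × ℝ → ℝ := pd (1, 0) P2 with hP3def
  set Q2 : ℝ × ℝ → ℝ := pd (0, 1) P1 with hQ2def
  have hQ2 : ContDiff ℝ (⊤ : ℕ∞) Q2 := pd_contDiff hP1 _
  -- identification of the iterated `Dx`/`Dy` with directional derivatives
  have e1 : ∀ a b, Dx u a b = P1 (a, b) := fun a b => (pd_hasDerivAt_x hF a b).deriv
  have e3 : ∀ a b, Dy u a b = pd (0, 1) F (a, b) := fun a b => (pd_hasDerivAt_y hF a b).deriv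
  have e2 : ∀ a b, Dx (Dx u) a b = P2 (a, b) := by
    intro a b
    have : (fun s => Dx u s b) = fun s => P1 (s, b) := funext fun s => e1 s b
    show deriv (fun s => Dx u s b) a = _
    rw [this]
    exact (pd_hasDerivAt_x hP1 a b).deriv
  have e4 : ∀ a b, Dy (Dx u) a b = Q2 (a, b) := by
    intro a b
    have : (fun t => Dx u a t) = fun t => P1 (a, t) := funext fun t => e1 a t
    show deriv (fun t => Dx u a t) b = _
    rw [this]
    exact (pd_hasDerivAt_y hP1 a b).deriv
  have e5 : ∀ a b, Dx (Dx (Dx u)) a b = P3 (a, b) := by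
    intro a b
    have : (fun s => Dx (Dx u) s b) = fun s => P2 (s, b) := funext fun s => e2 s b
    show deriv (fun s => Dx (Dx u) s b) a = _
    rw [this]
    exact (pd_hasDerivAt_x hP2 a b).deriv
  -- rewrite the two integrands
  have hNfun : (fun a b => N a b - (1/2) * φ a b * Dy u a b)
      = fun a b => -(1/2) * (P1 (a, b))^2 * Real.cos (u a b)
          - P2 (a, b) * (Q2 (a, b) - Real.sin (u a b)) := by
    funext a b
    rw [hN a b, e1 a b, e2 a b, e4 a b]
    ring
  have hMfun : (fun a b => M a b - (1/2) * φ a b * Dx u a b)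
      = fun a b => -(1/8) * (P1 (a, b))^4 + (1/2) * (P2 (a, b))^2 := by
    funext a b
    rw [hM a b, e1 a b, e2 a b]
    ring
  -- slice derivatives
  have hu_x : HasDerivAt (fun s => u s y) (P1 (x, y)) x := pd_hasDerivAt_x hF x y
  have hP1_x : HasDerivAt (fun s => P1 (s, y)) (P2 (x, y)) x := pd_hasDerivAt_x hP1 x y
  have hP2_x : HasDerivAt (fun s => P2 (s, y)) (P3 (x, y)) x := pd_hasDerivAt_x hP2 x y
  have hQ2_x : HasDerivAt (fun s => Q2 (s, y)) (pd (1, 0) Q2 (x, y)) x :=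
    pd_hasDerivAt_x hQ2 x y
  have hP1_y : HasDerivAt (fun t => P1 (x, t)) (Q2 (x, y)) y := pd_hasDerivAt_y hP1 x y
  have hP2_y : HasDerivAt (fun t => P2 (x, t)) (pd (0, 1) P2 (x, y)) y :=
    pd_hasDerivAt_y hP2 x y
  have d1 : deriv (fun s => -(1/2) * (P1 (s, y))^2 * Real.cos (u s y)
        - P2 (s, y) * (Q2 (s, y) - Real.sin (u s y))) x
      = -(1/2) * ((2 : ℕ) * P1 (x, y) ^ 1 * P2 (x, y)) * Real.cos (u x y)
        + (-(1/2) * (P1 (x, y))^2) * (-Real.sin (u x y) * P1 (x, y))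
        - (P3 (x, y) * (Q2 (x, y) - Real.sin (u x y))
          + P2 (x, y) * (pd (1, 0) Q2 (x, y) - Real.cos (u x y) * P1 (x, y))) := by
    have h := (((hP1_x.pow 2).const_mul (-(1/2) : ℝ)).mul hu_x.cos).sub
      (hP2_x.mul (hQ2_x.sub hu_x.sin))
    exact h.deriv.trans (by simp only [Pi.pow_apply, Pi.sub_apply])
  have d2 : deriv (fun t => -(1/8) * (P1 (x, t))^4 + (1/2) * (P2 (x, t))^2) y
      = -(1/8) * ((4 : ℕ) * P1 (x, y) ^ 3 * Q2 (x, y))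
        + (1/2) * ((2 : ℕ) * P2 (x, y) ^ 1 * pd (0, 1) P2 (x, y)) := by
    have h := ((hP1_y.pow 4).const_mul (-(1/8) : ℝ)).add
      ((hP2_y.pow 2).const_mul ((1/2) : ℝ))
    exact h.deriv.trans (by ring)
  have hcomm : pd (1, 0) Q2 (x, y) = pd (0, 1) P2 (x, y) := by
    rw [hQ2def, hP2def]
    exact pd_comm hP1 (0, 1) (1, 0) (x, y)
  rw [hNfun, hMfun, hφ x y, e1 x y, e4 x y, e5 x y]
  show _ = deriv (fun s => -(1/2) * (P1 (s, y))^2 * Real.cos (u s y)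
        - P2 (s, y) * (Q2 (s, y) - Real.sin (u s y))) x
      + deriv (fun t => -(1/8) * (P1 (x, t))^4 + (1/2) * (P2 (x, t))^2) y
  rw [d1, d2, hcomm]
  push_cast
  ring
end
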